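/- Let H be a Hadamard matrix of order n and Γ(H) its Hadamard graph. If x ≠ y are elements of X and a, b, d ∈ F₂, then the vertices (x,a,b) and (y,a,d) have exactly n/2 common neighbors in Γ(H). -/

import Mathlib

/-! A common neighbour of `(x, a, b)` and `(y, a, d)` has the form `(z, a + 1, e)`, where `e` is
determined by `z` through `H^{T(a)}_{x,z} = (-1)^{b+e}`; given that, the second adjacency holds iff
`H^{T(a)}_{x,z} H^{T(a)}_{y,z} = (-1)^{b+d}`. Since `H^{T(a)}` is again Hadamard, its rows `x` and
`y` are orthogonal `±1` vectors, so they agree in exactly `n/2` positions and disagree in the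
other `n/2`. -/

/-- `(-1)^e` for `e ∈ F₂`. -/
def sgn (e : ZMod 2) : ℝ := if e = 0 then 1 else -1

/-- `H^{T(a)}`: the matrix `H` if `a = 0`, its transpose if `a = 1`. -/
def Ht {X : Type*} (H : Matrix X X ℝ) (a : ZMod 2) : Matrix X X ℝ :=
  if a = 0 then H else H.transpose

/-- The Hadamard graph `Γ(H)` on `X × F₂ × F₂`: `(x,a,b)` is adjacent to `(y,c,d)`
iff `a ≠ c` and `(H^{T(a)})_{x,y} = (-1)^{b+d}`. -/
def hadamardGraph {X : Type*} (H : Matrix X X ℝ) :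
    SimpleGraph (X × ZMod 2 × ZMod 2) :=
  SimpleGraph.fromRel (fun v w => v.2.1 ≠ w.2.1 ∧ Ht H v.2.1 v.1 w.1 = sgn (v.2.2 + w.2.2))

/-- A Hadamard matrix indexed by a finite set `X`. -/
def IsHadamard {X : Type*} [Fintype X] [DecidableEq X] (H : Matrix X X ℝ) : Prop :=
  (∀ i j, H i j = 1 ∨ H i j = -1) ∧ H * H.transpose = (Fintype.card X : ℝ) • 1

lemma ZMod.two_eq_zero_or_one (a : ZMod 2) : a = 0 ∨ a = 1 := by
  revert a; decide

lemma ZMod.two_ne_iff_eq_add_one {a c : ZMod 2} : a ≠ c ↔ c = a + 1 := by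
  revert a c; decide

lemma sgn_add (u v : ZMod 2) : sgn (u + v) = sgn u * sgn v := by
  rcases u.two_eq_zero_or_one with rfl | rfl <;> rcases v.two_eq_zero_or_one with rfl | rfl <;>
    simp [sgn, show (1 + 1 : ZMod 2) = 0 from rfl]

lemma sgn_injective : Function.Injective sgn := by
  intro u v h
  rcases u.two_eq_zero_or_one with rfl | rfl <;> rcases v.two_eq_zero_or_one with rfl | rfl <;>
    first | rfl | norm_num [sgn] at h

lemma sgn_eq_one_or_neg_one (e : ZMod 2) : sgn e = 1 ∨ sgn e = -1 := by
  unfold sgn; split_ifs <;> simp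

lemma sgn_ne_zero (e : ZMod 2) : sgn e ≠ 0 := by
  rcases sgn_eq_one_or_neg_one e with h | h <;> norm_num [h]

lemma exists_sgn_add_eq (b : ZMod 2) {r : ℝ} (hr : r = 1 ∨ r = -1) : ∃ e, sgn (b + e) = r := by
  rcases hr with rfl | rfl
  · exact ⟨b, by rw [CharTwo.add_self_eq_zero]; rfl⟩
  · exact ⟨b + 1, by rw [← add_assoc, CharTwo.add_self_eq_zero, zero_add]; rfl⟩

lemma Ht_apply_of_ne {X : Type*} (H : Matrix X X ℝ) {a c : ZMod 2} (h : a ≠ c) (u z : X) :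
    Ht H c z u = Ht H a u z := by
  rcases a.two_eq_zero_or_one with rfl | rfl <;> rcases c.two_eq_zero_or_one with rfl | rfl <;>
    simp_all [Ht]

section hadamardGraph

variable {X : Type*} {H : Matrix X X ℝ}

lemma hadamardGraph_adj {u z : X} {a c e f : ZMod 2} :
    (hadamardGraph H).Adj (u, a, e) (z, c, f) ↔ c = a + 1 ∧ Ht H a u z = sgn (e + f) := by
  rw [hadamardGraph, SimpleGraph.fromRel_adj, ← ZMod.two_ne_iff_eq_add_one]
  constructor
  · rintro ⟨-, h | ⟨hca, h⟩⟩
    · exact h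
    · dsimp only at hca h
      rw [Ht_apply_of_ne H hca.symm, add_comm] at h
      exact ⟨hca.symm, h⟩
  · rintro ⟨hac, h⟩
    exact ⟨fun h' => hac (congrArg (·.2.1) h'), Or.inl ⟨hac, h⟩⟩

lemma hadamardGraph_mem_commonNeighbors {x y z : X} {a b d c e : ZMod 2} :
    (z, c, e) ∈ (hadamardGraph H).commonNeighbors (x, a, b) (y, a, d) ↔
      c = a + 1 ∧ Ht H a x z = sgn (b + e) ∧ Ht H a x z * Ht H a y z = sgn (b + d) := by
  have hsgn : sgn (b + d) = sgn (b + e) * sgn (d + e) := by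
    rw [← sgn_add, add_add_add_comm, CharTwo.add_self_eq_zero, add_zero]
  simp only [SimpleGraph.mem_commonNeighbors, hadamardGraph_adj]
  constructor
  · rintro ⟨⟨hc, hx⟩, -, hy⟩
    exact ⟨hc, hx, by rw [hx, hy, hsgn]⟩
  · rintro ⟨hc, hx, hxy⟩
    rw [hx, hsgn] at hxy
    exact ⟨⟨hc, hx⟩, hc, mul_left_cancel₀ (sgn_ne_zero _) hxy⟩

lemma hadamardGraph_injOn_fst_commonNeighbors (x y : X) (a b d : ZMod 2) :
    Set.InjOn Prod.fst ((hadamardGraph H).commonNeighbors (x, a, b) (y, a, d)) := by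
  rintro ⟨z, c, e⟩ hv ⟨z', c', e'⟩ hv' (rfl : z = z')
  obtain ⟨rfl, he, -⟩ := hadamardGraph_mem_commonNeighbors.mp hv
  obtain ⟨rfl, he', -⟩ := hadamardGraph_mem_commonNeighbors.mp hv'
  rw [add_right_injective b (sgn_injective (he.symm.trans he'))]

lemma hadamardGraph_image_fst_commonNeighbors {x : X} {a : ZMod 2}
    (hx : ∀ z, Ht H a x z = 1 ∨ Ht H a x z = -1) (y : X) (b d : ZMod 2) :
    Prod.fst '' (hadamardGraph H).commonNeighbors (x, a, b) (y, a, d) =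
      {z | Ht H a x z * Ht H a y z = sgn (b + d)} := by
  ext z
  constructor
  · rintro ⟨⟨z, c, e⟩, hv, rfl⟩
    exact (hadamardGraph_mem_commonNeighbors.mp hv).2.2
  · intro hz
    obtain ⟨e, he⟩ := exists_sgn_add_eq b (hx z)
    exact ⟨(z, a + 1, e), hadamardGraph_mem_commonNeighbors.mpr ⟨rfl, he.symm, hz⟩, rfl⟩

lemma hadamardGraph_ncard_commonNeighbors {x : X} {a : ZMod 2}
    (hx : ∀ z, Ht H a x z = 1 ∨ Ht H a x z = -1) (y : X) (b d : ZMod 2) :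
    ((hadamardGraph H).commonNeighbors (x, a, b) (y, a, d)).ncard =
      {z | Ht H a x z * Ht H a y z = sgn (b + d)}.ncard := by
  rw [← hadamardGraph_image_fst_commonNeighbors hx,
    (hadamardGraph_injOn_fst_commonNeighbors x y a b d).ncard_image]

end hadamardGraph

lemma two_mul_card_filter_eq {X : Type*} [Fintype X] {f : X → ℝ}
    (hf : ∀ z, f z = 1 ∨ f z = -1) (hsum : ∑ z, f z = 0) {s : ℝ} (hs : s = 1 ∨ s = -1) :
    2 * (Finset.univ.filter (fun z => f z = s)).card = Fintype.card X := by
  have hind : ∀ z, 1 + s * f z = 2 * if f z = s then 1 else 0 := by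
    intro z
    rcases hf z with h | h <;> rcases hs with rfl | rfl <;> norm_num [h]
  have h : (Fintype.card X : ℝ) = 2 * (Finset.univ.filter (fun z => f z = s)).card :=
    calc (Fintype.card X : ℝ) = ∑ z, (1 + s * f z) := by
          rw [Finset.sum_add_distrib, ← Finset.mul_sum, hsum, mul_zero, add_zero,
            Finset.sum_const, Finset.card_univ, nsmul_one]
      _ = 2 * (Finset.univ.filter (fun z => f z = s)).card := by
          rw [Finset.sum_congr rfl fun z _ => hind z, ← Finset.mul_sum, Finset.sum_boole]
  exact_mod_cast h.symm

namespace IsHadamard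

variable {X : Type*} [Fintype X] [DecidableEq X] {H : Matrix X X ℝ}

lemma transpose (hH : IsHadamard H) : IsHadamard H.transpose := by
  refine ⟨fun i j => hH.1 j i, ?_⟩
  rcases isEmpty_or_nonempty X with hX | hX
  · exact Subsingleton.elim _ _
  have hn : (Fintype.card X : ℝ) ≠ 0 := by positivity
  have hinv : H * ((Fintype.card X : ℝ)⁻¹ • H.transpose) = 1 := by
    rw [Matrix.mul_smul, hH.2, smul_smul, inv_mul_cancel₀ hn, one_smul]
  rw [Matrix.transpose_transpose, ← smul_inv_smul₀ hn (H.transpose * H), ← Matrix.smul_mul,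
    mul_eq_one_comm.mp hinv]

lemma Ht (hH : IsHadamard H) (a : ZMod 2) : IsHadamard (Ht H a) := by
  unfold _root_.Ht
  split_ifs
  exacts [hH, hH.transpose]

lemma sum_mul_eq_zero (hH : IsHadamard H) {x y : X} (hxy : x ≠ y) :
    ∑ z, H x z * H y z = 0 := by
  simpa [Matrix.mul_apply, Matrix.one_apply_ne hxy] using congrFun (congrFun hH.2 x) y

lemma two_mul_ncard_setOf_mul_eq (hH : IsHadamard H) {x y : X} (hxy : x ≠ y) {s : ℝ}
    (hs : s = 1 ∨ s = -1) : 2 * {z | H x z * H y z = s}.ncard = Fintype.card X := by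
  have hf : ∀ z, H x z * H y z = 1 ∨ H x z * H y z = -1 := fun z => by
    rcases hH.1 x z with h | h <;> rcases hH.1 y z with h' | h' <;> norm_num [h, h']
  rw [← Finset.coe_filter_univ, Set.ncard_coe_finset]
  exact two_mul_card_filter_eq hf (hH.sum_mul_eq_zero hxy) hs

end IsHadamard

theorem hadamardGraph_common_neighbors {X : Type*} [Fintype X] [DecidableEq X]
    (n : ℕ) (hn : Fintype.card X = n) (H : Matrix X X ℝ) (hH : IsHadamard H)
    (x y : X) (hxy : x ≠ y) (a b d : ZMod 2) :
    Set.ncard ((hadamardGraph H).neighborSet (x, a, b) ∩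
        (hadamardGraph H).neighborSet (y, a, d)) = n / 2 := by
  have hM : IsHadamard (Ht H a) := hH.Ht a
  have hcount := hM.two_mul_ncard_setOf_mul_eq hxy (sgn_eq_one_or_neg_one (b + d))
  change ((hadamardGraph H).commonNeighbors (x, a, b) (y, a, d)).ncard = n / 2
  rw [hadamardGraph_ncard_commonNeighbors (hM.1 x)]
  omega
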